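/- Let X be a standard Borel G-space with U-separated cross-section Y, μ a G-invariant Borel probability measure on X, and μ_Y its transverse measure (so μ(V.B) = m_G(V)·μ_Y(B) whenever V − V ⊆ U). Assume Δ ⊆ G and an open neighbourhood W ⊆ U of 0 with (Ξ_Y − Δ) ∩ W = {0}. Then for every Borel V₀ with V₀ − V₀ ⊆ W and m_G(V₀) > 0, every Borel B ⊆ Y, and all g₁,…,g_r ∈ Δ: μ_Y(B ∩ ⋂_{k=1}^r (−g_k).B) = μ(V₀.B ∩ ⋂_{k=1}^r (−g_k).(V₀.B)) / m_G(V₀). -/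

import Mathlib

/-!
Because `V₀ - V₀ ⊆ W` and `(Ξ_Y - Δ) ∩ W = {0}`, a point `v +ᵥ b` of `V₀.B` can be moved by
`g ∈ Δ` back into `V₀.B` only as `v +ᵥ (g +ᵥ b)`, with the same `v`. Hence
`V₀.B ∩ ⋂ₖ (-gₖ).(V₀.B) = V₀.(B ∩ ⋂ₖ (-gₖ).B)`, and the defining property of the transverse measure
applied to the right-hand side gives the identity; when `m_G(V₀) = ∞`, finiteness of `μ` forces
both sides to vanish.
-/

open scoped Pointwise ENNReal
open MeasureTheory Set

section ReturnTimes

variable {G X : Type*} [AddCommGroup G] [AddAction G X]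

variable (G) in
/-- The set `Ξ_Y` of return times of `Y`. -/
def returnTimes (Y : Set X) : Set G := {g | ∃ y ∈ Y, g +ᵥ y ∈ Y}

theorem eq_of_add_sub_vadd_mem {Y B : Set X} {Δ W V : Set G}
    (hsep : (returnTimes G Y - Δ) ∩ W ⊆ {0}) (hVW : V - V ⊆ W) (hBY : B ⊆ Y)
    {g : G} (hg : g ∈ Δ) :
    ∀ v ∈ V, ∀ v' ∈ V, ∀ b ∈ B, (g + (v - v')) +ᵥ b ∈ B → v = v' := by
  intro v hv v' hv' b hb hmem
  have hdiff : v - v' ∈ (returnTimes G Y - Δ) ∩ W :=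
    ⟨⟨_, ⟨b, hBY hb, hBY hmem⟩, g, hg, add_sub_cancel_left _ _⟩, hVW (sub_mem_sub hv hv')⟩
  exact sub_eq_zero.1 (hsep hdiff)

theorem vadd_mem_of_vadd_vadd_mem_vadd_set {V : Set G} {B : Set X} {g v : G} {b : X}
    (hsep : ∀ v ∈ V, ∀ v' ∈ V, ∀ b ∈ B, (g + (v - v')) +ᵥ b ∈ B → v = v')
    (hv : v ∈ V) (hb : b ∈ B) (h : g +ᵥ (v +ᵥ b) ∈ V +ᵥ B) : g +ᵥ b ∈ B := by
  obtain ⟨v', hv', b', hb', hvb' : v' +ᵥ b' = g +ᵥ (v +ᵥ b)⟩ := h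
  have hb'_eq : b' = (g + (v - v')) +ᵥ b := by
    rw [← neg_vadd_vadd v' b', hvb', vadd_vadd, vadd_vadd]
    congr 1
    abel
  obtain rfl := hsep v hv v' hv' b hb (hb'_eq ▸ hb')
  simpa [hb'_eq] using hb'

theorem vadd_set_inter_iInter_neg_vadd {ι : Sort*} {V : Set G} {B : Set X} {g : ι → G}
    (hsep : ∀ i, ∀ v ∈ V, ∀ v' ∈ V, ∀ b ∈ B, (g i + (v - v')) +ᵥ b ∈ B → v = v') :
    (V +ᵥ B) ∩ ⋂ i, -g i +ᵥ (V +ᵥ B) = V +ᵥ (B ∩ ⋂ i, -g i +ᵥ B) := by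
  refine Subset.antisymm ?_ ?_
  · rintro _ ⟨⟨v, hv, b, hb, rfl⟩, hx⟩
    refine ⟨v, hv, b, ⟨hb, mem_iInter.2 fun i => ?_⟩, rfl⟩
    have hxi := mem_iInter.1 hx i
    rw [mem_vadd_set_iff_neg_vadd_mem, neg_neg] at hxi ⊢
    exact vadd_mem_of_vadd_vadd_mem_vadd_set (hsep i) hv hb hxi
  · exact vadd_inter_subset.trans <| inter_subset_inter_right _ <|
      (vadd_iInter_subset _ _).trans <| iInter_mono fun i => (vadd_comm V (-g i) B).subset

end ReturnTimes

theorem stmt10_general {G X : Type*} [AddCommGroup G] [MeasurableSpace G]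
    [MeasurableSpace X] [AddAction G X]
    (μG : Measure G) (U : Set G) (Y : Set X)
    (μ : Measure X) [IsProbabilityMeasure μ] (ν : Measure X)
    (htrans : ∀ (V : Set G) (B : Set X), MeasurableSet V → V - V ⊆ U →
      MeasurableSet B → B ⊆ Y → μ (V +ᵥ B) = μG V * ν B)
    (Δ : Set G) (W : Set G) (hWU : W ⊆ U)
    (hWsep : ({g : G | ∃ y ∈ Y, g +ᵥ y ∈ Y} - Δ) ∩ W = {0})
    (V₀ : Set G) (hV₀ : MeasurableSet V₀) (hV₀W : V₀ - V₀ ⊆ W) (hV₀pos : 0 < μG V₀)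
    (B : Set X) (hB : MeasurableSet B) (hBY : B ⊆ Y)
    (r : ℕ) (g : Fin r → G) (hg : ∀ k, g k ∈ Δ)
    (hmeas : ∀ k, MeasurableSet ((-(g k)) +ᵥ B)) :
    ν (B ∩ ⋂ k, (-(g k)) +ᵥ B) =
      μ ((V₀ +ᵥ B) ∩ ⋂ k, (-(g k)) +ᵥ (V₀ +ᵥ B)) / μG V₀ := by
  set C := B ∩ ⋂ k, -g k +ᵥ B
  have hμC : μ (V₀ +ᵥ C) = ν C * μG V₀ := by
    rw [mul_comm]
    exact htrans V₀ C hV₀ (hV₀W.trans hWU) (hB.inter (.iInter hmeas)) (inter_subset_left.trans hBY)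
  have hνC : μG V₀ = ∞ → ν C = 0 := fun htop => by
    by_contra hne
    exact measure_ne_top μ _ (by rw [hμC, htop, ENNReal.mul_top hne])
  rw [vadd_set_inter_iInter_neg_vadd fun k => eq_of_add_sub_vadd_mem hWsep.subset hV₀W hBY (hg k),
    hμC, ENNReal.mul_div_cancel_right' (fun h => absurd h hV₀pos.ne') hνC]

/-- Transverse-measure identity: with `Y` a `U`-separated cross-section, `μ` a `G`-invariant Borel
probability measure on `X`, `ν = μ_Y` its transverse measure (so `μ(V.B) = m_G(V)·ν(B)` whenever
`V - V ⊆ U`, `B ⊆ Y`), `Δ ⊆ G` and `W ⊆ U` an open neighbourhood of `0` with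
`(Ξ_Y - Δ) ∩ W = {0}`: for every Borel `V₀` with `V₀ - V₀ ⊆ W` and `m_G(V₀) > 0`, every Borel
`B ⊆ Y` and all `g₁,…,g_r ∈ Δ`,
`μ_Y(B ∩ ⋂ₖ (-gₖ).B) = μ(V₀.B ∩ ⋂ₖ (-gₖ).(V₀.B)) / m_G(V₀)`. -/
theorem stmt10 {G X : Type*} [AddCommGroup G] [TopologicalSpace G] [IsTopologicalAddGroup G]
    [LocallyCompactSpace G] [SecondCountableTopology G] [MeasurableSpace G] [BorelSpace G]
    [MeasurableSpace X] [AddAction G X]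
    (μG : Measure G) [μG.IsAddHaarMeasure]
    (U : Set G) (hUo : IsOpen U) (hU0 : (0 : G) ∈ U)
    (Y : Set X) (hY : MeasurableSet Y)
    (hcross : ∀ x : X, ∃ g : G, ∃ y ∈ Y, x = g +ᵥ y)
    (hsep : {g : G | ∃ y ∈ Y, g +ᵥ y ∈ Y} ∩ U = {0})
    (μ : Measure X) [IsProbabilityMeasure μ]
    (hinv : ∀ g : G, Measure.map (fun x => g +ᵥ x) μ = μ)
    (ν : Measure X) (hνY : ν Yᶜ = 0)
    (htrans : ∀ (V : Set G) (B : Set X), MeasurableSet V → V - V ⊆ U →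
      MeasurableSet B → B ⊆ Y → μ (V +ᵥ B) = μG V * ν B)
    (Δ : Set G) (W : Set G) (hWo : IsOpen W) (hW0 : (0 : G) ∈ W) (hWU : W ⊆ U)
    (hWsep : ({g : G | ∃ y ∈ Y, g +ᵥ y ∈ Y} - Δ) ∩ W = {0})
    (V₀ : Set G) (hV₀ : MeasurableSet V₀) (hV₀W : V₀ - V₀ ⊆ W) (hV₀pos : 0 < μG V₀)
    (B : Set X) (hB : MeasurableSet B) (hBY : B ⊆ Y)
    (r : ℕ) (g : Fin r → G) (hg : ∀ k, g k ∈ Δ)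
    (hmeas : ∀ k, MeasurableSet ((-(g k)) +ᵥ B)) :
    ν (B ∩ ⋂ k, (-(g k)) +ᵥ B) =
      μ ((V₀ +ᵥ B) ∩ ⋂ k, (-(g k)) +ᵥ (V₀ +ᵥ B)) / μG V₀ :=
  stmt10_general μG U Y μ ν htrans Δ W hWU hWsep V₀ hV₀ hV₀W hV₀pos B hB hBY r g hg hmeas
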